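/- arXiv:hep-th/0107236 — 3 statements merged into one kernel-verified Lean document; each statement's English description precedes it below -/
import Mathlib

section
/- Let A, B, C be pairwise strongly commuting self-adjoint operators on a Hilbert space, and let X be a two-dimensional linear subspace of ℝ³ that does not contain the z-axis. If the joint spectrum σ_{A,B,C} is contained in X, then C is a linear function of A and B; i.e., there exist real constants a, b such that C = aA + bB (equivalently, the spectral measure of C is the pushforward of the joint spectral measure of (A,B) under the linear map (x,y) ↦ ax + by). -/
/-!
Outside the closed subspace `X` every point has a neighbourhood of spectral measure zero,
and countably many such neighbourhoods cover `Xᶜ`, so `P.E Xᶜ = 0` and `P` only sees `X`.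
Since `X` meets the `z`-axis only in `0`, the coordinate `p 2` restricted to `X` vanishes on
the common kernel of `p 0` and `p 1`, hence equals `a * p 0 + b * p 1` on `X`. The sets
`{p 2 ∈ I}` and `{a * p 0 + b * p 1 ∈ I}` therefore agree on `X` and have the same projection.
-/

open scoped InnerProductSpace

/-- A projection-valued measure on a measurable space `α`, acting on a complex
Hilbert space `H`.  `E S` is the spectral projection associated with `S`. -/
structure PVM (α : Type*) [MeasurableSpace α] (H : Type*) [NormedAddCommGroup H]
    [InnerProductSpace ℂ H] where
  E : Set α → H →L[ℂ] H
  selfAdjoint : ∀ S : Set α, MeasurableSet S → ∀ x y : H,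
    @inner ℂ H _ (E S x) y = @inner ℂ H _ x (E S y)
  mul_inter : ∀ S T : Set α, MeasurableSet S → MeasurableSet T →
    (E S).comp (E T) = E (S ∩ T)
  empty : E ∅ = 0
  univ : E Set.univ = 1
  countably_additive : ∀ s : ℕ → Set α, (∀ n, MeasurableSet (s n)) →
    Pairwise (Function.onFun Disjoint s) → ∀ x y : H,
    HasSum (fun n => @inner ℂ H _ x (E (s n) y)) (@inner ℂ H _ x (E (⋃ n, s n) y))

/-- The support (joint spectrum) of a projection-valued measure: the set of points each
of whose neighbourhoods carries a nonzero spectral projection. -/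
def PVM.support {α : Type*} [MeasurableSpace α] [PseudoMetricSpace α] {H : Type*}
    [NormedAddCommGroup H] [InnerProductSpace ℂ H] (P : PVM α H) : Set α :=
  {a | ∀ ε > 0, P.E (Metric.ball a ε) ≠ 0}

namespace PVM

variable {α : Type*} [MeasurableSpace α] {H : Type*} [NormedAddCommGroup H]
  [InnerProductSpace ℂ H] (P : PVM α H)

theorem E_eq_zero_of_subset {S N : Set α} (hS : MeasurableSet S) (hN : MeasurableSet N)
    (hSN : S ⊆ N) (hN0 : P.E N = 0) : P.E S = 0 := by
  rw [← Set.inter_eq_left.mpr hSN, ← P.mul_inter S N hS hN, hN0, ContinuousLinearMap.comp_zero]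

theorem E_union {S T : Set α} (hS : MeasurableSet S) (hT : MeasurableSet T)
    (hST : Disjoint S T) : P.E (S ∪ T) = P.E S + P.E T := by
  set s : ℕ → Set α := fun n => if n = 0 then S else if n = 1 then T else ∅
  have hs : ∀ n, MeasurableSet (s n) := by
    rintro (_ | _ | n) <;> simp [s, hS, hT]
  have hdisj : Pairwise (Function.onFun Disjoint s) := by
    rintro (_ | _ | i) (_ | _ | j) hij <;> simp_all [Function.onFun, s, hST.symm]
  have hU : ⋃ n, s n = S ∪ T := by
    ext p
    simp only [Set.mem_iUnion, Set.mem_union]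
    refine ⟨fun ⟨n, hn⟩ => ?_, ?_⟩
    · rcases n with _ | _ | n <;> simp_all [s]
    · rintro (hp | hp)
      exacts [⟨0, by simpa [s]⟩, ⟨1, by simpa [s]⟩]
  ext y
  refine ext_inner_left ℂ fun x => ?_
  have hsum := P.countably_additive s hs hdisj x y
  rw [hU] at hsum
  have hfin : HasSum (fun n => ⟪x, P.E (s n) y⟫_ℂ)
      (∑ n ∈ Finset.range 2, ⟪x, P.E (s n) y⟫_ℂ) :=
    hasSum_sum_of_ne_finset_zero fun n hn => by
      rcases n with _ | _ | n
      · simp at hn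
      · simp at hn
      · simp [s, P.empty]
  rw [hsum.unique hfin]
  simp [s, Finset.sum_range_succ, inner_add_right]

theorem E_iUnion_nat_eq_zero (s : ℕ → Set α) (hs : ∀ n, MeasurableSet (s n))
    (hs0 : ∀ n, P.E (s n) = 0) : P.E (⋃ n, s n) = 0 := by
  have hd : ∀ n, MeasurableSet (disjointed s n) := MeasurableSet.disjointed hs
  have hd0 : ∀ n, P.E (disjointed s n) = 0 := fun n =>
    P.E_eq_zero_of_subset (hd n) (hs n) (disjointed_subset s n) (hs0 n)
  ext y
  refine ext_inner_left ℂ fun x => ?_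
  have hsum := P.countably_additive (disjointed s) hd (disjoint_disjointed s) x y
  simp only [hd0, zero_apply, inner_zero_right, iUnion_disjointed] at hsum
  rw [zero_apply, inner_zero_right]
  exact hsum.unique hasSum_zero

theorem E_iUnion_eq_zero {ι : Type*} [Countable ι] (s : ι → Set α)
    (hs : ∀ i, MeasurableSet (s i)) (hs0 : ∀ i, P.E (s i) = 0) : P.E (⋃ i, s i) = 0 := by
  cases isEmpty_or_nonempty ι
  · simp [P.empty]
  · obtain ⟨f, hf⟩ := exists_surjective_nat ι
    rw [← hf.iUnion_comp s]
    exact P.E_iUnion_nat_eq_zero _ (fun n => hs (f n)) fun n => hs0 (f n)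

theorem E_eq_of_inter_eq {N S T : Set α} (hN : MeasurableSet N) (hS : MeasurableSet S)
    (hT : MeasurableSet T) (hNc : P.E Nᶜ = 0) (h : S ∩ N = T ∩ N) : P.E S = P.E T := by
  have hcut : ∀ S, MeasurableSet S → P.E S = P.E (S ∩ N) := fun S hS =>
    calc P.E S = P.E (S ∩ N ∪ S \ N) := by rw [Set.inter_union_sdiff]
      _ = P.E (S ∩ N) + P.E (S \ N) :=
        P.E_union (hS.inter hN) (hS.diff hN) Set.disjoint_sdiff_inter.symm
      _ = P.E (S ∩ N) := by
        rw [P.E_eq_zero_of_subset (hS.diff hN) hN.compl (fun _ hp => hp.2) hNc, add_zero]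
  rw [hcut S hS, hcut T hT, h]

theorem E_eq_zero_of_disjoint_support [PseudoMetricSpace α] [OpensMeasurableSpace α]
    [SecondCountableTopology α] {S : Set α} (hS : MeasurableSet S)
    (h : Disjoint S P.support) : P.E S = 0 := by
  have hball : ∀ q ∈ S, ∃ ε > 0, P.E (Metric.ball q ε) = 0 := fun q hq => by
    simpa [PVM.support] using h.notMem_of_mem_left hq
  choose! ε hε hε0 using hball
  -- Lindelöf: countably many of these null balls already cover `S`.
  obtain ⟨t, hts, htc, hcover⟩ := TopologicalSpace.countable_cover_nhdsWithin
    (f := fun q => Metric.ball q (ε q)) fun q hq =>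
      mem_nhdsWithin_of_mem_nhds (Metric.ball_mem_nhds q (hε q hq))
  have : Countable t := htc.to_subtype
  refine P.E_eq_zero_of_subset hS (.biUnion htc fun _ _ => measurableSet_ball) hcover ?_
  rw [Set.biUnion_eq_iUnion]
  exact P.E_iUnion_eq_zero _ (fun _ => measurableSet_ball) fun q => hε0 q (hts q.2)

end PVM

theorem Submodule.exists_apply_last_eq_sum_of_single_last_notMem {K : Type*} [Field K] {n : ℕ}
    (X : Submodule K (Fin (n + 1) → K)) (hX : Pi.single (Fin.last n) 1 ∉ X) :
    ∃ c : Fin n → K, ∀ p ∈ X, p (Fin.last n) = ∑ i, c i * p i.castSucc := by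
  let L : Fin n → X →ₗ[K] K := fun i => (LinearMap.proj i.castSucc).domRestrict X
  let ℓ : X →ₗ[K] K := (LinearMap.proj (Fin.last n)).domRestrict X
  have hker : ⨅ i, LinearMap.ker (L i) ≤ LinearMap.ker ℓ := by
    intro p hp
    simp only [Submodule.mem_iInf, LinearMap.mem_ker] at hp ⊢
    -- otherwise `p` would be a nonzero multiple of the last basis vector
    by_contra hlast
    replace hlast : p.1 (Fin.last n) ≠ 0 := hlast
    refine hX ?_
    convert X.smul_mem (p.1 (Fin.last n))⁻¹ p.2
    ext j
    cases j using Fin.lastCases with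
    | last => simp [hlast]
    | cast i => simp [Fin.castSucc_ne_last, show p.1 i.castSucc = 0 from hp i]
  obtain ⟨c, hc⟩ :=
    (Submodule.mem_span_range_iff_exists_fun K).mp (mem_span_of_iInf_ker_le_ker hker)
  refine ⟨c, fun p hp => ?_⟩
  simpa [L, ℓ] using (LinearMap.congr_fun hc ⟨p, hp⟩).symm

theorem linear_dependence_of_jointSpectrum_subset_plane_general
    {H : Type*} [NormedAddCommGroup H] [InnerProductSpace ℂ H]
    (P : PVM (Fin 3 → ℝ) H) (X : Submodule ℝ (Fin 3 → ℝ))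
    (hzaxis : (Pi.single 2 1 : Fin 3 → ℝ) ∉ X)
    (hsupp : P.support ⊆ (X : Set (Fin 3 → ℝ))) :
    ∃ a b : ℝ, ∀ I : Set ℝ, MeasurableSet I →
      P.E {p : Fin 3 → ℝ | p 2 ∈ I} = P.E {p : Fin 3 → ℝ | a * p 0 + b * p 1 ∈ I} := by
  obtain ⟨c, hc⟩ := X.exists_apply_last_eq_sum_of_single_last_notMem hzaxis
  have hX : MeasurableSet (X : Set (Fin 3 → ℝ)) := X.closed_of_finiteDimensional.measurableSet
  have hXc : P.E (X : Set (Fin 3 → ℝ))ᶜ = 0 :=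
    P.E_eq_zero_of_disjoint_support hX.compl (Set.disjoint_compl_left_iff_subset.mpr hsupp)
  refine ⟨c 0, c 1, fun I hI => P.E_eq_of_inter_eq hX (measurable_pi_apply 2 hI) ?_ hXc ?_⟩
  · exact (((measurable_pi_apply 0).const_mul _).add ((measurable_pi_apply 1).const_mul _)) hI
  · ext p
    simp only [Set.mem_inter_iff, Set.mem_ofPred_eq, SetLike.mem_coe, and_congr_left_iff]
    intro hp
    rw [show (2 : Fin 3) = Fin.last 2 from rfl, hc p hp, Fin.sum_univ_two]
    rfl

/-- If the joint spectrum of three strongly commuting self-adjoint operators `A, B, C`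
(described by their joint spectral measure `P` on `ℝ³`) is contained in a two-dimensional
subspace `X` of `ℝ³` not containing the `z`-axis, then `C = aA + bB` for some reals
`a, b`, in the sense that the spectral measure of `C` (the third marginal of `P`) is the
pushforward of the joint spectral measure of `(A,B)` under `(x,y) ↦ ax + by`. -/
theorem linear_dependence_of_jointSpectrum_subset_plane
    {H : Type*} [NormedAddCommGroup H] [InnerProductSpace ℂ H] [CompleteSpace H]
    (P : PVM (Fin 3 → ℝ) H) (X : Submodule ℝ (Fin 3 → ℝ))
    (hdim : Module.finrank ℝ X = 2)
    (hzaxis : (Pi.single 2 1 : Fin 3 → ℝ) ∉ X)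
    (hsupp : P.support ⊆ (X : Set (Fin 3 → ℝ))) :
    ∃ a b : ℝ, ∀ I : Set ℝ, MeasurableSet I →
      P.E {p : Fin 3 → ℝ | p 2 ∈ I} = P.E {p : Fin 3 → ℝ | a * p 0 + b * p 1 ∈ I} :=
  linear_dependence_of_jointSpectrum_subset_plane_general P X hzaxis hsupp
end

section
/- Let A, B, C be pairwise strongly commuting self-adjoint operators on a Hilbert space, and let π_z : ℝ³ → ℝ² denote the orthogonal projection along the z-axis onto the x-y-plane. Then the joint spectrum of (A,B) equals the closure of the image under π_z of the joint spectrum of (A,B,C): σ_{A,B} = closure(π_z(σ_{A,B,C})). -/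
/-!
The `(x,y)`-marginal of the joint spectral measure `P` of `(A,B,C)` is the push-forward
`S ↦ P.E (π_z ⁻¹' S)`, whose support is the joint spectrum of `(A,B)`. The image of a point
of `supp P` under the continuous map `π_z` lies in the (closed) support of the push-forward.
Conversely, a ball around a point outside `closure (π_z '' supp P)` pulls back to an open set
missing `supp P`, and `P` vanishes off its support: by second countability the complement of
the support is a countable union of open `P`-null sets.
-/

open scoped InnerProductSpace

namespace PVM

variable {α β H : Type*} [MeasurableSpace α] [NormedAddCommGroup H] [InnerProductSpace ℂ H]

def map [MeasurableSpace β] (P : PVM α H) {f : α → β} (hf : Measurable f) : PVM β H where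
  E S := P.E (f ⁻¹' S)
  selfAdjoint S hS := P.selfAdjoint _ (hf hS)
  mul_inter S T hS hT := P.mul_inter _ _ (hf hS) (hf hT)
  empty := P.empty
  univ := P.univ
  countably_additive s hs hdisj x y := by
    simpa only [Set.preimage_iUnion] using
      P.countably_additive (fun n => f ⁻¹' s n) (fun n => hf (hs n))
        (fun m n hmn => (hdisj hmn).preimage f) x y

theorem E_eq_zero_of_subset_s1 (P : PVM α H) {S T : Set α} (hS : MeasurableSet S)
    (hT : MeasurableSet T) (hST : S ⊆ T) (h : P.E T = 0) : P.E S = 0 := by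
  rw [← Set.inter_eq_self_of_subset_right hST, ← P.mul_inter T S hT hS, h,
    ContinuousLinearMap.zero_comp]

theorem E_iUnion_eq_zero_s1 (P : PVM α H) (s : ℕ → Set α) (hs : ∀ n, MeasurableSet (s n))
    (h : ∀ n, P.E (s n) = 0) : P.E (⋃ n, s n) = 0 := by
  have hd : ∀ n, P.E (disjointed s n) = 0 := fun n =>
    P.E_eq_zero_of_subset_s1 (MeasurableSet.disjointed hs n) (hs n) (disjointed_subset s n) (h n)
  have hinner : ∀ x y : H, ⟪x, P.E (⋃ n, s n) y⟫_ℂ = 0 := by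
    intro x y
    have hsum := P.countably_additive _ (MeasurableSet.disjointed hs) (disjoint_disjointed s) x y
    simp only [hd, zero_apply, inner_zero_right, iUnion_disjointed] at hsum
    exact hasSum_zero.unique hsum |>.symm
  ext y
  exact inner_self_eq_zero.mp (hinner _ y)

theorem E_sUnion_eq_zero (P : PVM α H) {T : Set (Set α)} (hT : T.Countable)
    (hm : ∀ s ∈ T, MeasurableSet s) (h : ∀ s ∈ T, P.E s = 0) : P.E (⋃₀ T) = 0 := by
  rcases T.eq_empty_or_nonempty with rfl | hne
  · simpa using P.empty
  obtain ⟨s, rfl⟩ := hT.exists_eq_range hne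
  rw [Set.sUnion_range]
  exact P.E_iUnion_eq_zero_s1 s (fun n => hm _ ⟨n, rfl⟩) (fun n => h _ ⟨n, rfl⟩)

variable [PseudoMetricSpace α] [OpensMeasurableSpace α]

theorem notMem_support_of_isOpen (P : PVM α H) {U : Set α} {a : α} (hU : IsOpen U)
    (ha : a ∈ U) (h : P.E U = 0) : a ∉ P.support := by
  obtain ⟨ε, hε, hball⟩ := Metric.isOpen_iff.mp hU a ha
  exact fun hsupp =>
    hsupp ε hε (P.E_eq_zero_of_subset_s1 Metric.isOpen_ball.measurableSet hU.measurableSet hball h)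

theorem isClosed_support (P : PVM α H) : IsClosed P.support := by
  refine isOpen_compl_iff.mp (isOpen_iff_forall_mem_open.mpr fun a ha => ?_)
  obtain ⟨ε, hε, h⟩ : ∃ ε > 0, P.E (Metric.ball a ε) = 0 := by
    simpa [support] using ha
  exact ⟨Metric.ball a ε, fun b hb => P.notMem_support_of_isOpen Metric.isOpen_ball hb h,
    Metric.isOpen_ball, Metric.mem_ball_self hε⟩

theorem E_compl_support [SecondCountableTopology α] (P : PVM α H) : P.E P.supportᶜ = 0 := by
  let N : Set (Set α) := {V | IsOpen V ∧ P.E V = 0}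
  obtain ⟨T, hTc, hTN, hTU⟩ := TopologicalSpace.isOpen_sUnion_countable N fun V hV => hV.1
  have hcover : P.supportᶜ ⊆ ⋃₀ T := by
    intro a ha
    obtain ⟨ε, hε, h⟩ : ∃ ε > 0, P.E (Metric.ball a ε) = 0 := by
      simpa [support] using ha
    rw [hTU]
    exact ⟨Metric.ball a ε, ⟨Metric.isOpen_ball, h⟩, Metric.mem_ball_self hε⟩
  have hTm : ∀ V ∈ T, MeasurableSet V := fun V hV => (hTN hV).1.measurableSet
  exact P.E_eq_zero_of_subset_s1 P.isClosed_support.measurableSet.compl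
    (MeasurableSet.sUnion hTc hTm) hcover (P.E_sUnion_eq_zero hTc hTm fun V hV => (hTN hV).2)

theorem support_map [SecondCountableTopology α] [PseudoMetricSpace β] [MeasurableSpace β]
    [BorelSpace β] (P : PVM α H) {f : α → β} (hf : Continuous f) :
    (P.map hf.measurable).support = closure (f '' P.support) := by
  apply subset_antisymm
  · intro q hq
    refine Metric.mem_closure_iff.mpr fun ε hε => ?_
    by_contra! hfar
    have hmiss : f ⁻¹' Metric.ball q ε ⊆ P.supportᶜ := fun a ha hsupp =>
      (hfar (f a) ⟨a, hsupp, rfl⟩).not_gt (by rwa [dist_comm])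
    exact hq ε hε (P.E_eq_zero_of_subset_s1 (hf.measurable Metric.isOpen_ball.measurableSet)
      P.isClosed_support.measurableSet.compl hmiss P.E_compl_support)
  · refine closure_minimal ?_ (P.map hf.measurable).isClosed_support
    rintro _ ⟨a, ha, rfl⟩ ε hε h
    exact P.notMem_support_of_isOpen (Metric.isOpen_ball.preimage hf)
      (Metric.mem_ball_self hε) h ha

end PVM

theorem jointSpectrum_pair_eq_closure_proj_general
    {H : Type*} [NormedAddCommGroup H] [InnerProductSpace ℂ H]
    (P : PVM (Fin 3 → ℝ) H) :
    {q : Fin 2 → ℝ | ∀ ε > 0,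
        P.E {p : Fin 3 → ℝ | (fun i : Fin 2 => p i.castSucc) ∈ Metric.ball q ε} ≠ 0}
      = closure ((fun p : Fin 3 → ℝ => fun i : Fin 2 => p i.castSucc) '' P.support) :=
  P.support_map (continuous_pi fun i => continuous_apply i.castSucc)

/-- The joint spectrum of `(A,B)` is the closure of the image of the joint spectrum of
`(A,B,C)` under the orthogonal projection `π_z` along the `z`-axis onto the `x`-`y`-plane.
Here `P` is the joint spectral measure of the strongly commuting self-adjoint operators
`A, B, C` on `ℝ³`, and the left-hand side is the support of its `(x,y)`-marginal, i.e. the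
joint spectrum of `(A,B)`. -/
theorem jointSpectrum_pair_eq_closure_proj
    {H : Type*} [NormedAddCommGroup H] [InnerProductSpace ℂ H] [CompleteSpace H]
    (P : PVM (Fin 3 → ℝ) H) :
    {q : Fin 2 → ℝ | ∀ ε > 0,
        P.E {p : Fin 3 → ℝ | (fun i : Fin 2 => p i.castSucc) ∈ Metric.ball q ε} ≠ 0}
      = closure ((fun p : Fin 3 → ℝ => fun i : Fin 2 => p i.castSucc) '' P.support) :=
  jointSpectrum_pair_eq_closure_proj_general P
end

section
/- Fix E ≥ 0 and let σ^{(E)} := {(η, k, κ) ∈ ℝ × ℝ^s × ℝ : −η(1 − e^κ) ≤ E|k|(1 + e^κ)}. If G is a subgroup of (ℝ^{s+2}, +) contained in σ^{(E)}, then the closed linear span of G is also contained in σ^{(E)}. -/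
/-!
Membership `(η, k, κ) ∈ σ^{(E)}` reads `η · tanh (κ/2) ≤ E‖k‖`; since `tanh (tκ/2)` lies between
`0` and `tanh (κ/2)` for `t ∈ [0, 1]`, the set `σ^{(E)}` is star-shaped about `0`, and it is closed.
The vectors some positive integer multiple of which lies in `G` form a subgroup, stable under
rational scalars and contained in `σ^{(E)}` by star-shapedness. By density of `ℚ` in `ℝ` its
closure is a real subspace, hence contains the span of `G`.
-/

/-- The constraint region `σ^{(E)} ⊆ ℝ × ℝ^s × ℝ` (coordinates `(η, k, κ)`) determined by
an efficiency bound `E ≥ 0`: the set of `(η,k,κ)` with `−η(1−e^κ) ≤ E·|k|·(1+e^κ)`. -/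
def sigmaE (s : ℕ) (E : ℝ) : Set (ℝ × EuclideanSpace ℝ (Fin s) × ℝ) :=
  {q | -q.1 * (1 - Real.exp q.2.2) ≤ E * ‖q.2.1‖ * (1 + Real.exp q.2.2)}

namespace AddSubgroup

variable {V : Type*} [AddCommGroup V] {G : AddSubgroup V} {x : V}

def saturation (G : AddSubgroup V) : AddSubgroup V :=
  (AddCommGroup.torsion (V ⧸ G)).comap (QuotientAddGroup.mk' G)

theorem mem_saturation : x ∈ G.saturation ↔ ∃ n : ℕ, 0 < n ∧ n • x ∈ G := by
  simp [saturation, AddCommGroup.mem_torsion, isOfFinAddOrder_iff_nsmul_eq_zero,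
    ← QuotientAddGroup.mk_nsmul]

theorem le_saturation (G : AddSubgroup V) : G ≤ G.saturation :=
  fun _ hx ↦ mem_saturation.2 ⟨1, one_pos, by rwa [one_nsmul]⟩

theorem mem_saturation_of_nsmul_mem {n : ℕ} (hn : 0 < n) (h : n • x ∈ G.saturation) :
    x ∈ G.saturation := by
  obtain ⟨m, hm, hmx⟩ := mem_saturation.1 h
  exact mem_saturation.2 ⟨n * m, Nat.mul_pos hn hm, by rwa [mul_nsmul]⟩

section Real

variable [Module ℝ V]

theorem rat_smul_mem_saturation (hx : x ∈ G.saturation) (q : ℚ) :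
    (q : ℝ) • x ∈ G.saturation := by
  refine mem_saturation_of_nsmul_mem q.pos ?_
  have hq : (q.den : ℝ) * q = q.num := by exact_mod_cast q.den_mul_eq_num
  rw [← Nat.cast_smul_eq_nsmul ℝ, smul_smul, hq, Int.cast_smul_eq_zsmul]
  exact zsmul_mem hx _

theorem coe_saturation_subset_of_starConvex {S : Set V} (hS : StarConvex ℝ 0 S)
    (hG : (G : Set V) ⊆ S) : (G.saturation : Set V) ⊆ S := by
  intro x hx
  obtain ⟨n, hn, hnx⟩ := mem_saturation.1 hx
  have hn' : (1 : ℝ) ≤ n := by exact_mod_cast hn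
  have hx_eq : x = (n : ℝ)⁻¹ • (n • x) := by
    rw [← Nat.cast_smul_eq_nsmul ℝ, inv_smul_smul₀ (by positivity)]
  rw [hx_eq]
  exact hS.smul_mem (hG hnx) (by positivity) (inv_le_one_of_one_le₀ hn')

end Real

end AddSubgroup

section Topological

variable {V : Type*} [AddCommGroup V] [Module ℝ V] [TopologicalSpace V] [ContinuousSMul ℝ V]

theorem smul_mem_closure_of_forall_rat_smul_mem {T : Set V}
    (hT : ∀ x ∈ T, ∀ q : ℚ, (q : ℝ) • x ∈ T) (r : ℝ) {x : V} (hx : x ∈ closure T) :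
    r • x ∈ closure T := by
  have hrx : (r, x) ∈ closure (Set.range ((↑) : ℚ → ℝ) ×ˢ T) := by
    rw [closure_prod_eq]
    exact ⟨Rat.denseRange_cast r, hx⟩
  refine map_mem_closure (f := fun p : ℝ × V ↦ p.1 • p.2) continuous_smul hrx ?_
  rintro ⟨_, y⟩ ⟨⟨q, rfl⟩, hy⟩
  exact hT y hy q

theorem span_subset_closure_saturation [IsTopologicalAddGroup V] (G : AddSubgroup V) :
    (Submodule.span ℝ (G : Set V) : Set V) ⊆ closure G.saturation := by
  let W : Submodule ℝ V :=
    { G.saturation.topologicalClosure with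
      smul_mem' := fun r _ hx ↦ smul_mem_closure_of_forall_rat_smul_mem
        (fun _ hy q ↦ G.rat_smul_mem_saturation hy q) r hx }
  exact Submodule.span_le (p := W).2 fun _ hx ↦ subset_closure (G.le_saturation hx)

theorem closure_span_subset_of_starConvex [IsTopologicalAddGroup V] {S : Set V}
    (hS : StarConvex ℝ 0 S) (hSc : IsClosed S) {G : AddSubgroup V} (hG : (G : Set V) ⊆ S) :
    closure (Submodule.span ℝ (G : Set V) : Set V) ⊆ S :=
  closure_minimal ((span_subset_closure_saturation G).trans
    (closure_minimal (G.coe_saturation_subset_of_starConvex hS hG) hSc)) hSc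

end Topological

/-- `expRatio κ = tanh (κ / 2)`. -/
noncomputable def expRatio (κ : ℝ) : ℝ := (Real.exp κ - 1) / (Real.exp κ + 1)

theorem expRatio_zero : expRatio 0 = 0 := by simp [expRatio]

theorem monotone_expRatio : Monotone expRatio := by
  intro a b hab
  rw [expRatio, expRatio, div_le_div_iff₀ (by positivity) (by positivity)]
  nlinarith [Real.exp_le_exp.mpr hab]

theorem expRatio_mul_mul_le_max_zero (η κ : ℝ) {t : ℝ} (ht₀ : 0 ≤ t) (ht₁ : t ≤ 1) :
    expRatio (t * κ) * η ≤ max 0 (expRatio κ * η) := by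
  have hmul := fun (a b c : ℝ) ↦ (Set.image_mul_const_uIcc a b c).subset
  have htκ : t * κ ∈ Set.uIcc 0 κ := by
    simpa using hmul κ 0 1 ⟨t, by simp [Set.uIcc_of_le, ht₀, ht₁], rfl⟩
  have hg : expRatio (t * κ) ∈ Set.uIcc 0 (expRatio κ) := by
    simpa [expRatio_zero] using monotone_expRatio.image_uIcc_subset ⟨_, htκ, rfl⟩
  simpa using (hmul η _ _ ⟨_, hg, rfl⟩).2

theorem mem_sigmaE_iff {s : ℕ} {E : ℝ} {q : ℝ × EuclideanSpace ℝ (Fin s) × ℝ} :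
    q ∈ sigmaE s E ↔ expRatio q.2.2 * q.1 ≤ E * ‖q.2.1‖ := by
  have h : 0 < Real.exp q.2.2 + 1 := by positivity
  rw [sigmaE, Set.mem_ofPred_eq, expRatio, div_mul_eq_mul_div, div_le_iff₀ h]
  constructor <;> intro h' <;> linarith

theorem isClosed_sigmaE (s : ℕ) (E : ℝ) : IsClosed (sigmaE s E) :=
  isClosed_le (by fun_prop) (by fun_prop)

theorem starConvex_sigmaE {s : ℕ} {E : ℝ} (hE : 0 ≤ E) : StarConvex ℝ 0 (sigmaE s E) := by
  refine starConvex_zero_iff.2 fun q hq t ht₀ ht₁ ↦ mem_sigmaE_iff.2 ?_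
  rw [mem_sigmaE_iff] at hq
  have hk : 0 ≤ E * ‖q.2.1‖ := by positivity
  calc expRatio (t * q.2.2) * (t * q.1) = t * (expRatio (t * q.2.2) * q.1) := by ring
    _ ≤ t * (E * ‖q.2.1‖) := mul_le_mul_of_nonneg_left
      ((expRatio_mul_mul_le_max_zero _ _ ht₀ ht₁).trans (max_le hk hq)) ht₀
    _ = E * ‖t • q.2.1‖ := by rw [norm_smul, Real.norm_of_nonneg ht₀]; ring

/-- If a subgroup `G` of `(ℝ^{s+2}, +)` is contained in `σ^{(E)}`, then the closed linear
span of `G` is also contained in `σ^{(E)}`. -/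
theorem closedSpan_subset_sigmaE_of_subgroup_subset (s : ℕ) (E : ℝ) (hE : 0 ≤ E)
    (G : AddSubgroup (ℝ × EuclideanSpace ℝ (Fin s) × ℝ))
    (hG : (G : Set (ℝ × EuclideanSpace ℝ (Fin s) × ℝ)) ⊆ sigmaE s E) :
    closure ((Submodule.span ℝ (G : Set (ℝ × EuclideanSpace ℝ (Fin s) × ℝ)) :
        Submodule ℝ (ℝ × EuclideanSpace ℝ (Fin s) × ℝ)) : Set (ℝ × EuclideanSpace ℝ (Fin s) × ℝ))
      ⊆ sigmaE s E :=
  closure_span_subset_of_starConvex (starConvex_sigmaE hE) (isClosed_sigmaE s E) hG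
end
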